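/- Let r, s, and n be integers with s ≠ 0, and let b be a positive integer. Then δ_b(r, s, −n/b) = −δ_b(r−s, −s, n/b). -/

import Mathlib

open Polynomial
open scoped Classical

noncomputable section

/-- The generalized Dwork map `D_b(α)`: the unique rational whose reduced denominator is
coprime to `b` and such that `b·D_b(α) − α ∈ {0, 1, …, b−1}`. -/
def dwork (b : ℕ) (α : ℚ) : ℚ :=
  if h : ∃ θ : ℚ, Nat.Coprime θ.den b ∧ ∃ k : ℤ, 0 ≤ k ∧ k < (b : ℤ) ∧ (b : ℚ) * θ - α = (k : ℚ)
  then h.choose else 0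

/-- `α ∈ ℤ_{≤0}`. -/
def IsNonPosInt (α : ℚ) : Prop := ∃ m : ℤ, m ≤ 0 ∧ α = (m : ℚ)

/-- `α ∈ ℤ_{>0}`. -/
def IsPosInt (α : ℚ) : Prop := ∃ m : ℤ, 0 < m ∧ α = (m : ℚ)

/-- `𝔫_α`. -/
def frakn (α : ℚ) : ℤ := if 0 ≤ α then α.num else |α.num| + 1

/-- `⟨x⟩`: the fractional part of `x` if `x ∉ ℤ`, and `1` if `x ∈ ℤ`. -/
def cangle (x : ℝ) : ℝ := if ∃ m : ℤ, x = (m : ℝ) then 1 else Int.fract x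

/-- Christol order `x ⪯ y`. -/
def cle (x y : ℝ) : Prop := cangle x < cangle y ∨ (cangle x = cangle y ∧ y ≤ x)

/-- The step function `δ_b(r, s, ·)`. -/
def qdelta (b : ℕ) (r s : ℤ) (x : ℝ) : ℤ :=
  if Int.gcd (s / (Nat.gcd (Int.gcd r s) b : ℤ)) (((b / Nat.gcd (Int.gcd r s) b : ℕ)) : ℤ) = 1 then
    ⌊(Nat.gcd (Int.gcd r s) b : ℝ) * x
        - ((dwork (b / Nat.gcd (Int.gcd r s) b) ((r : ℚ) / (s : ℚ)) : ℚ) : ℝ)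
        - ((⌊1 - (r : ℚ) / (s : ℚ)⌋ : ℤ) : ℝ) / ((b / Nat.gcd (Int.gcd r s) b : ℕ) : ℝ)⌋ + 1
  else 0

/-- The Landau-type step function `Δ_b^{𝐫,𝐭}`. -/
def qDeltaFn {v w : ℕ} (b : ℕ) (rr : Fin v → ℤ × ℤ) (tt : Fin w → ℤ × ℤ) (x : ℝ) : ℤ :=
  (∑ i, qdelta b (rr i).1 (rr i).2 x) - (∑ j, qdelta b (tt j).1 (tt j).2 x)

/-- The q-Pochhammer symbol `(q^r; q^s)_n` for `n ∈ ℕ`, inside `ℚ(q)`. -/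
def qPoch (r s : ℤ) (n : ℕ) : RatFunc ℚ :=
  ∏ i ∈ Finset.range n, (1 - RatFunc.X ^ (r + s * (i : ℤ)))

/-- The q-Pochhammer symbol `(q^r; q^s)_n` for `n ∈ ℤ`. -/
def qPochZ (r s : ℤ) (n : ℤ) : RatFunc ℚ :=
  if 0 ≤ n then qPoch r s n.toNat else (qPoch (r - s) (-s) (-n).toNat)⁻¹

/-- Multiplicity of `p` in `g`: the largest `k` with `p^k ∣ g`. -/
def polyMult (p g : Polynomial ℚ) : ℕ := sSup {k : ℕ | p ^ k ∣ g}

/-- The valuation `v_{φ_b}` on `ℚ(q)` attached to the `b`-th cyclotomic polynomial. -/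
def cycVal (b : ℕ) (f : RatFunc ℚ) : ℤ :=
  (polyMult (cyclotomic b ℚ) f.num : ℤ) - (polyMult (cyclotomic b ℚ) f.denom : ℤ)

/-- The image of an integer polynomial in `ℚ(q)`. -/
def polyZ (g : Polynomial ℤ) : RatFunc ℚ :=
  algebraMap (Polynomial ℚ) (RatFunc ℚ) (g.map (Int.castRingHom ℚ))

/-- `f ∈ ℤ[q⁻¹, q]`. -/
def IsIntLaurent (f : RatFunc ℚ) : Prop :=
  ∃ (m : ℕ) (g : Polynomial ℤ), f * RatFunc.X ^ m = polyZ g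

/-- `f ∈ ℤ[q]`. -/
def IsIntPoly (f : RatFunc ℚ) : Prop := ∃ g : Polynomial ℤ, f = polyZ g

/-- The ratio attached to a pair of integers. -/
def ratOf (p : ℤ × ℤ) : ℚ := (p.1 : ℚ) / (p.2 : ℚ)

/-- The q-hypergeometric term `Q_{𝐫,𝐭}(q; n)`, `n ∈ ℕ`. -/
def qHyp {v w : ℕ} (rr : Fin v → ℤ × ℤ) (tt : Fin w → ℤ × ℤ) (n : ℕ) : RatFunc ℚ :=
  (∏ i, qPoch (rr i).1 (rr i).2 n) / (∏ j, qPoch (tt j).1 (tt j).2 n)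

/-- The q-hypergeometric term `Q_{𝐫,𝐭}(q; n)`, `n ∈ ℤ`. -/
def qHypZ {v w : ℕ} (rr : Fin v → ℤ × ℤ) (tt : Fin w → ℤ × ℤ) (n : ℤ) : RatFunc ℚ :=
  (∏ i, qPochZ (rr i).1 (rr i).2 n) / (∏ j, qPochZ (tt j).1 (tt j).2 n)

/-- `c := gcd(r, s, b)`. -/
def cOf (p : ℤ × ℤ) (b : ℕ) : ℕ := Nat.gcd (Int.gcd p.1 p.2) b

/-- Membership in `V_b` (resp. `W_b`): `gcd(s, b) = gcd(r, s, b)`. -/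
def inV (p : ℤ × ℤ) (b : ℕ) : Prop := Nat.gcd p.2.natAbs b = cOf p b

/-- `d_{𝐫,𝐭}`: the lcm of all the `s_i` and `u_j`. -/
def dRT {v w : ℕ} (rr : Fin v → ℤ × ℤ) (tt : Fin w → ℤ × ℤ) : ℕ :=
  Nat.lcm (Finset.univ.lcm fun i => ((rr i).2).natAbs)
    (Finset.univ.lcm fun j => ((tt j).2).natAbs)

/-- `b̃`: the greatest divisor of `b` coprime to `d`. -/
def btilde (d b : ℕ) : ℕ := Nat.findGreatest (fun k => k ∣ b ∧ Nat.Coprime k d) b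

/-- The unique `a ∈ {1,…,d}` with `a·b̃ ≡ 1 (mod d)`. -/
def aOf (d b : ℕ) : ℕ :=
  if h : ∃ a, 1 ≤ a ∧ a ≤ d ∧ (a * btilde d b) % d = 1 % d then h.choose else 1

/-- The representative of `b` modulo `d` lying in `{1,…,d}`. -/
def repMod (d b : ℕ) : ℕ := if b % d = 0 then d else b % d

/-- The jump abscissa `(⟨e·α⟩ + k)/c − ⌊1 − a·α⌋`. -/
def jumpPt (p : ℤ × ℤ) (b : ℕ) (a ei : ℤ) (k : ℕ) : ℝ :=
  (cangle (((ei : ℚ) * ratOf p : ℚ) : ℝ) + (k : ℝ)) / (cOf p b : ℝ)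
    - ((⌊1 - (a : ℚ) * ratOf p⌋ : ℤ) : ℝ)

/-- Number of pairs `(i,k)` with jump abscissa `⪯ x` coming from one pair `p`. -/
def XiCount (p : ℤ × ℤ) (b : ℕ) (a ei : ℤ) (x : ℝ) : ℕ :=
  if inV p b then ((Finset.range (cOf p b)).filter fun k => cle (jumpPt p b a ei k) x).card else 0

/-- The generalized Christol step function `Ξ_{𝐫,𝐭}(b, ·)`, relative to choices `e`, `f`. -/
def Xi {v w : ℕ} (rr : Fin v → ℤ × ℤ) (tt : Fin w → ℤ × ℤ) (b : ℕ)
    (e : Fin v → ℤ) (f : Fin w → ℤ) (x : ℝ) : ℤ :=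
  (∑ i, (XiCount (rr i) b ((aOf (dRT rr tt) b : ℕ) : ℤ) (e i) x : ℤ))
    - (∑ j, (XiCount (tt j) b ((aOf (dRT rr tt) b : ℕ) : ℤ) (f j) x : ℤ))

/-- `ei` is an admissible choice for the pair `p` and `b`: positive with `b·ei ≡ c (mod s)`. -/
def goodChoice (p : ℤ × ℤ) (b : ℕ) (ei : ℤ) : Prop :=
  inV p b → 0 < ei ∧ p.2 ∣ ((b : ℤ) * ei - (cOf p b : ℤ))

end

/-!
Write `α = r/s`, `c = gcd(r, s, b)` and `N = b/c`. Replacing `(r, s)` by `(r - s, -s)` changes neither `gcd(r, s, b)` nor the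
coprimality condition, and replaces `α` by `1 - α`. The uniqueness in the definition of the Dwork
map gives `D_N(1 - α) = 1 - D_N(α)`, and with `N·D_N(α) = α + k` both floors become floors of
`(m + t)/N` with `m ∈ ℤ` and `0 ≤ t < 1`; the claim reduces to `⌊-m/N⌋ + ⌊(m-1)/N⌋ = -1`.
-/

lemma Rat.den_div_intCast_dvd_natAbs (a b : ℤ) : ((a : ℚ) / b).den ∣ b.natAbs := by
  rw [← Int.natCast_dvd, ← Rat.divInt_eq_div]
  exact Rat.den_dvd a b

lemma Rat.den_eq_one_of_natCast_mul_eq_intCast {q : ℚ} {b : ℕ} {z : ℤ} (hb : b ≠ 0)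
    (hq : q.den.Coprime b) (h : (b : ℚ) * q = z) : q.den = 1 := by
  have hqz : q = (z : ℚ) / (b : ℤ) := by
    rw [Int.cast_natCast, eq_div_iff (by exact_mod_cast hb), mul_comm, h]
  have hden := Rat.den_div_intCast_dvd_natAbs z b
  rw [← hqz, Int.natAbs_natCast] at hden
  exact Nat.Coprime.eq_one_of_dvd hq hden

lemma Int.neg_ediv_add_sub_one_ediv (m : ℤ) {N : ℤ} (hN : 0 < N) : (-m) / N + (m - 1) / N = -1 := by
  obtain ⟨hle, hlt⟩ := (Int.ediv_eq_iff_of_pos hN).1 (rfl : (m - 1) / N = (m - 1) / N)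
  have : (-m) / N = -1 - (m - 1) / N :=
    (Int.ediv_eq_iff_of_pos hN).2 ⟨by linarith, by linarith⟩
  omega

lemma Int.floor_intCast_add_div_natCast {k : Type*} [Field k] [LinearOrder k] [IsOrderedRing k]
    [FloorRing k] (m : ℤ) {t : k} (ht₀ : 0 ≤ t) (ht₁ : t < 1) (N : ℕ) :
    ⌊((m : k) + t) / N⌋ = m / N := by
  rw [Int.floor_div_natCast, Int.floor_intCast_add, Int.floor_eq_zero_iff.2 ⟨ht₀, ht₁⟩, add_zero]

section Dwork

variable {b : ℕ} {α θ θ' : ℚ}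

def IsDworkValue (b : ℕ) (α θ : ℚ) : Prop :=
  θ.den.Coprime b ∧ ∃ k : ℤ, 0 ≤ k ∧ k < (b : ℤ) ∧ (b : ℚ) * θ - α = k

theorem exists_isDworkValue (hb : 0 < b) (hα : α.den.Coprime b) : ∃ θ, IsDworkValue b α θ := by
  have : NeZero b := ⟨hb.ne'⟩
  set u : ZMod b := -(α.num : ZMod b) * ((α.den : ZMod b))⁻¹
  have hu : ((α.num + u.val * α.den : ℤ) : ZMod b) = 0 := by
    push_cast
    rw [ZMod.natCast_zmod_val, mul_assoc, mul_comm _ (α.den : ZMod b), ZMod.coe_mul_inv_eq_one _ hα]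
    ring
  obtain ⟨M, hM⟩ := (ZMod.intCast_zmod_eq_zero_iff_dvd _ b).1 hu
  refine ⟨M / α.den, ?_, u.val, by positivity, by exact_mod_cast u.val_lt, ?_⟩
  · exact Nat.Coprime.coprime_dvd_left (by simpa using Rat.den_div_intCast_dvd_natAbs M α.den) hα
  · have hMq : (b : ℚ) * M = α.num + u.val * α.den := by exact_mod_cast hM.symm
    have hden : (α.den : ℚ) ≠ 0 := by positivity
    rw [← mul_div_assoc, hMq, add_div, mul_div_assoc, div_self hden, Rat.num_div_den]
    push_cast
    ring

theorem IsDworkValue.eq (h : IsDworkValue b α θ) (h' : IsDworkValue b α θ') : θ = θ' := by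
  obtain ⟨hθ, k, hk₀, hkb, hk⟩ := h
  obtain ⟨hθ', k', hk₀', hkb', hk'⟩ := h'
  have hb : b ≠ 0 := by omega
  have hdiff : (b : ℚ) * (θ - θ') = ((k - k' : ℤ) : ℚ) := by push_cast; linarith
  have hden : (θ - θ').den = 1 :=
    Rat.den_eq_one_of_natCast_mul_eq_intCast hb
      (Nat.Coprime.coprime_dvd_left (Rat.sub_den_dvd θ θ') (hθ.mul_left hθ')) hdiff
  obtain ⟨t, ht⟩ : ∃ t : ℤ, θ - θ' = t := ⟨_, (Rat.coe_int_num_of_den_eq_one hden).symm⟩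
  have hbt : (b : ℤ) * t = k - k' := by rw [ht] at hdiff; exact_mod_cast hdiff
  have hkk : k - k' = 0 :=
    Int.eq_zero_of_abs_lt_dvd ⟨t, hbt.symm⟩ (abs_sub_lt_iff.2 ⟨by omega, by omega⟩)
  rw [hkk, Int.cast_zero] at hdiff
  exact sub_eq_zero.1 ((mul_eq_zero.1 hdiff).resolve_left (by exact_mod_cast hb))

theorem IsDworkValue.dwork_eq (h : IsDworkValue b α θ) : dwork b α = θ := by
  have hex : ∃ θ, IsDworkValue b α θ := ⟨θ, h⟩
  rw [dwork]
  exact (dif_pos hex).trans (hex.choose_spec.eq h)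

theorem isDworkValue_dwork (hb : 0 < b) (hα : α.den.Coprime b) :
    IsDworkValue b α (dwork b α) := by
  obtain ⟨θ, hθ⟩ := exists_isDworkValue hb hα
  rwa [hθ.dwork_eq]

theorem IsDworkValue.one_sub (h : IsDworkValue b α θ) : IsDworkValue b (1 - α) (1 - θ) := by
  obtain ⟨hθ, k, hk₀, hkb, hk⟩ := h
  exact ⟨by rwa [Rat.ofNat_sub_den], b - 1 - k, by omega, by omega, by push_cast; linarith⟩

theorem dwork_one_sub (hb : 0 < b) (hα : α.den.Coprime b) : dwork b (1 - α) = 1 - dwork b α :=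
  (isDworkValue_dwork hb hα).one_sub.dwork_eq

end Dwork

theorem floor_dwork_add_floor_dwork_one_sub {N : ℕ} (hN : 0 < N) {α : ℚ} (hα : α.den.Coprime N)
    (n : ℤ) :
    ⌊-(n : ℝ) / N - (dwork N α : ℝ) - (⌊1 - α⌋ : ℝ) / N⌋
      + ⌊(n : ℝ) / N - (dwork N (1 - α) : ℝ) - (⌊α⌋ : ℝ) / N⌋ = -2 := by
  obtain ⟨-, k, -, -, hk⟩ := isDworkValue_dwork hN hα
  have hD : (dwork N α : ℝ) = (α + k) / N := by
    rw [eq_div_iff (by positivity), mul_comm]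
    exact_mod_cast (eq_add_of_sub_eq' hk)
  have hfloor : ⌊1 - α⌋ = 1 - ⌈α⌉ := by
    rw [sub_eq_add_neg, add_comm, Int.floor_add_one, Int.floor_neg]; ring
  have h₁ : -(n : ℝ) / N - (α + k) / N - ((1 - ⌈α⌉ : ℤ) : ℝ) / N
      = (((-(n + 1 + k) : ℤ) : ℝ) + ((⌈α⌉ - α : ℚ) : ℝ)) / N := by
    push_cast; ring
  have h₂ : (n : ℝ) / N - (1 - (α + k) / N) - (⌊α⌋ : ℝ) / N
      = (((n + k : ℤ) : ℝ) + ((Int.fract α : ℚ) : ℝ)) / N - 1 := by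
    rw [Int.fract]; push_cast; field_simp; ring
  rw [dwork_one_sub hN hα, Rat.cast_sub, Rat.cast_one, hD, hfloor, h₁, h₂, Int.floor_sub_one,
    Int.floor_intCast_add_div_natCast _ (by exact_mod_cast sub_nonneg.2 (Int.le_ceil α))
      (by exact_mod_cast sub_lt_iff_lt_add'.2 (Int.ceil_lt_add_one α)),
    Int.floor_intCast_add_div_natCast _ (by exact_mod_cast Int.fract_nonneg α)
      (by exact_mod_cast Int.fract_lt_one α)]
  have := Int.neg_ediv_add_sub_one_ediv (n + 1 + k) (N := N) (by exact_mod_cast hN)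
  rw [show n + 1 + k - 1 = n + k by ring] at this
  omega

theorem Rat.den_div_coprime_of_gcd_ediv_eq_one {r s : ℤ} {c N : ℕ} (hr : (c : ℤ) ∣ r)
    (hs : (c : ℤ) ∣ s) (h : Int.gcd (s / c) N = 1) : ((r : ℚ) / s).den.Coprime N := by
  rcases eq_or_ne c 0 with rfl | hc
  · simp_all
  have hcq : ((c : ℤ) : ℚ) ≠ 0 := by exact_mod_cast hc
  have hrs : (r : ℚ) / s = ((r / c : ℤ) : ℚ) / ((s / c : ℤ) : ℚ) := by
    rw [Int.cast_div hr hcq, Int.cast_div hs hcq, div_div_div_cancel_right₀ hcq]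
  rw [Int.gcd_eq_natAbs_gcd_natAbs, Int.natAbs_natCast] at h
  rw [hrs]
  exact Nat.Coprime.coprime_dvd_left (Rat.den_div_intCast_dvd_natAbs _ _) h

/-- Lemma 3.7: `δ_b(r, s, −n/b) = −δ_b(r−s, −s, n/b)`. -/
theorem qdelta_neg (r s n : ℤ) (hs : s ≠ 0) (b : ℕ) (hb : 0 < b) :
    qdelta b r s (-(n : ℝ) / (b : ℝ)) = - qdelta b (r - s) (-s) ((n : ℝ) / (b : ℝ)) := by
  have hgcd : Int.gcd (r - s) (-s) = Int.gcd r s := by rw [Int.gcd_neg, Int.gcd_sub_self_left]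
  have hα : ((r - s : ℤ) : ℚ) / ((-s : ℤ) : ℚ) = 1 - (r : ℚ) / s := by
    have : (s : ℚ) ≠ 0 := by exact_mod_cast hs
    push_cast; field_simp; ring
  have hcg : (Nat.gcd (Int.gcd r s) b : ℤ) ∣ Int.gcd r s := by exact_mod_cast Nat.gcd_dvd_left _ _
  have hcr := hcg.trans (Int.gcd_dvd_left r s)
  have hcs := hcg.trans (Int.gcd_dvd_right r s)
  have hc : 0 < Nat.gcd (Int.gcd r s) b := Nat.gcd_pos_of_pos_right _ hb
  have hN : 0 < b / Nat.gcd (Int.gcd r s) b := Nat.div_pos (Nat.gcd_le_right _ hb) hc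
  have hx (x : ℝ) : (Nat.gcd (Int.gcd r s) b : ℝ) * (x / b)
      = x / (b / Nat.gcd (Int.gcd r s) b : ℕ) := by
    rw [Nat.cast_div (Nat.gcd_dvd_right _ _) (by positivity)]
    field_simp
  rw [qdelta, qdelta, hgcd, hα, sub_sub_cancel, Int.neg_ediv_of_dvd hcs, Int.neg_gcd, hx, hx]
  split_ifs with hcop
  · have := floor_dwork_add_floor_dwork_one_sub hN
      (Rat.den_div_coprime_of_gcd_ediv_eq_one hcr hcs hcop) n
    omega
  · simp
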